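/- arXiv:2007.14494 — 3 statements merged into one kernel-verified Lean document; each statement's English description precedes it below -/
import Mathlib

section
/- Let A be a symmetric n×n real matrix and μ₀ ∈ ℝ. Then trace(A · T_r^∞(μ₀, A)) = (r+1)·σ_{r+1}^∞(μ₀, A) − μ₀·σ_r^∞(μ₀, A). -/
/-- The `k`-th elementary symmetric polynomial of `μ₁, ..., μₙ`
(with `σ₀ = 1` and `σ_k = 0` for `k > n`). -/
noncomputable def esymmVec {n : ℕ} (μ : Fin n → ℝ) (k : ℕ) : ℝ :=
  ∑ s ∈ Finset.univ.powersetCard k, ∏ i ∈ s, μ i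

/-- The `r`-th weighted elementary symmetric polynomial
`σ_r^∞(μ₀, μ) = Σ_{j=0}^r (μ₀^j / j!) σ_{r-j}(μ)`. -/
noncomputable def wsigma {n : ℕ} (μ₀ : ℝ) (μ : Fin n → ℝ) (r : ℕ) : ℝ :=
  ∑ j ∈ Finset.range (r + 1), μ₀ ^ j / (Nat.factorial j : ℝ) * esymmVec μ (r - j)

/-- The classical `r`-th Newton transformation
`T_r(A) = Σ_{j=0}^r (-1)^j σ_{r-j}(A) A^j` of a symmetric real matrix `A`,
where `σ_k(A)` is the `k`-th elementary symmetric polynomial of the eigenvalues of `A`. -/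
noncomputable def cNewton {n : ℕ} (A : Matrix (Fin n) (Fin n) ℝ) (hA : A.IsHermitian)
    (r : ℕ) : Matrix (Fin n) (Fin n) ℝ :=
  ∑ j ∈ Finset.range (r + 1), ((-1 : ℝ) ^ j * esymmVec hA.eigenvalues (r - j)) • A ^ j

/-- The `r`-th weighted Newton transformation
`T_r^∞(μ₀, A) = Σ_{j=0}^r (-1)^j σ_{r-j}^∞(μ₀, A) A^j` of a symmetric real matrix `A`. -/
noncomputable def wNewton {n : ℕ} (μ₀ : ℝ) (A : Matrix (Fin n) (Fin n) ℝ)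
    (hA : A.IsHermitian) (r : ℕ) : Matrix (Fin n) (Fin n) ℝ :=
  ∑ j ∈ Finset.range (r + 1), ((-1 : ℝ) ^ j * wsigma μ₀ hA.eigenvalues (r - j)) • A ^ j

/-!
Generating functions. With `E = Σ σ_k X^k = ∏ i, (1 + μ_i X)` and
`P = Σ_l (-1)^l p_{l+1} X^l` its logarithmic derivative (`p_k` the power sums of the eigenvalues),
Newton's identities say `E' = P E`. The weighted polynomials `σ_r^∞` are the coefficients of
`W = exp(μ₀ X) E`, so `W' = (μ₀ + P) W`. Comparing `X^r`-coefficients gives the claim, because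
`trace(A T_r^∞) = Σ_j (-1)^j p_{j+1} σ_{r-j}^∞` is the `X^r`-coefficient of `P W`.
-/

open Finset PowerSeries

theorem Matrix.IsHermitian.trace_pow {𝕜 ι : Type*} [RCLike 𝕜] [Fintype ι] [DecidableEq ι]
    {A : Matrix ι ι 𝕜} (hA : A.IsHermitian) (m : ℕ) :
    (A ^ m).trace = ∑ i, (hA.eigenvalues i : 𝕜) ^ m := by
  conv_lhs => rw [hA.spectral_theorem, ← map_pow, Unitary.conjStarAlgAut_apply,
    Matrix.trace_mul_cycle, Unitary.coe_star_mul_self, one_mul, Matrix.diagonal_pow,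
    Matrix.trace_diagonal]
  simp

theorem derivative_rescale_exp {K : Type*} [Field K] [CharZero K] (a : K) :
    d⁄dX K (rescale a (exp K)) = C a * rescale a (exp K) := by
  ext k
  simp only [coeff_derivative, coeff_rescale, coeff_exp, coeff_C_mul, Nat.factorial_succ]
  push_cast
  field_simp
  ring

section Series

variable {n : ℕ} (μ : Fin n → ℝ)

noncomputable def esymmSeries : ℝ⟦X⟧ := mk (esymmVec μ)

noncomputable def psumSeries : ℝ⟦X⟧ := mk fun l ↦ (-1) ^ l * ∑ i, μ i ^ (l + 1)

noncomputable def wsigmaSeries (μ₀ : ℝ) : ℝ⟦X⟧ := rescale μ₀ (exp ℝ) * esymmSeries μ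

theorem esymmVec_eq_eval_esymm (k : ℕ) :
    esymmVec μ k = MvPolynomial.eval μ (MvPolynomial.esymm (Fin n) ℝ k) := by
  simp [MvPolynomial.esymm, esymmVec]

theorem succ_mul_esymmVec_eq_sum_antidiagonal (m : ℕ) :
    (m + 1) * esymmVec μ (m + 1) =
      ∑ p ∈ antidiagonal m, esymmVec μ p.1 * ((-1) ^ p.2 * ∑ i, μ i ^ (p.2 + 1)) := by
  have h := congrArg (MvPolynomial.eval μ) (MvPolynomial.mul_esymm_eq_sum (Fin n) ℝ (m + 1))
  simp only [map_mul, map_pow, map_natCast, map_neg, map_one, map_sum, ← esymmVec_eq_eval_esymm,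
    MvPolynomial.psum, MvPolynomial.eval_X] at h
  push_cast at h
  rw [h, sum_filter, Nat.sum_antidiagonal_succ', if_neg (lt_irrefl _), zero_add, mul_sum]
  refine sum_congr rfl fun ⟨a, b⟩ hab ↦ ?_
  rw [HasAntidiagonal.mem_antidiagonal] at hab
  have hsign : (-1 : ℝ) ^ (m + 1 + 1) * (-1) ^ a = (-1) ^ b := by
    rw [← pow_add, show m + 1 + 1 + a = b + 2 * (a + 1) by omega, pow_add, pow_mul]
    norm_num
  rw [if_pos (by simp only; omega), ← hsign]
  ring

theorem derivative_esymmSeries :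
    d⁄dX ℝ (esymmSeries μ) = psumSeries μ * esymmSeries μ := by
  ext m
  rw [coeff_derivative, coeff_mul, ← Nat.sum_antidiagonal_swap, esymmSeries, coeff_mk, mul_comm,
    succ_mul_esymmVec_eq_sum_antidiagonal]
  simp only [psumSeries, coeff_mk, Prod.fst_swap, Prod.snd_swap, mul_comm]

theorem derivative_wsigmaSeries (μ₀ : ℝ) :
    d⁄dX ℝ (wsigmaSeries μ μ₀) = (C μ₀ + psumSeries μ) * wsigmaSeries μ μ₀ := by
  rw [wsigmaSeries, Derivation.leibniz, derivative_esymmSeries, derivative_rescale_exp,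
    smul_eq_mul, smul_eq_mul]
  ring

theorem coeff_wsigmaSeries (μ₀ : ℝ) (r : ℕ) :
    coeff r (wsigmaSeries μ μ₀) = wsigma μ₀ μ r := by
  rw [wsigmaSeries, coeff_mul, Nat.sum_antidiagonal_eq_sum_range_succ_mk, wsigma]
  simp [esymmSeries, coeff_rescale, coeff_exp, div_eq_mul_inv]

end Series

theorem trace_mul_wNewton_eq_coeff {n : ℕ} (μ₀ : ℝ) (A : Matrix (Fin n) (Fin n) ℝ)
    (hA : A.IsHermitian) (r : ℕ) :
    (A * wNewton μ₀ A hA r).trace =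
      coeff r (psumSeries hA.eigenvalues * wsigmaSeries hA.eigenvalues μ₀) := by
  rw [coeff_mul, Nat.sum_antidiagonal_eq_sum_range_succ_mk, wNewton, mul_sum, Matrix.trace_sum]
  refine sum_congr rfl fun j _ ↦ ?_
  rw [Matrix.mul_smul, Matrix.trace_smul, ← pow_succ', hA.trace_pow, coeff_wsigmaSeries,
    psumSeries, coeff_mk, smul_eq_mul]
  simp only [Real.ringHom_apply]
  ring

/-- `trace(A · T_r^∞(μ₀, A)) = (r+1)·σ_{r+1}^∞(μ₀, A) − μ₀·σ_r^∞(μ₀, A)`. -/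
theorem trace_mul_wNewton {n : ℕ} (μ₀ : ℝ) (A : Matrix (Fin n) (Fin n) ℝ)
    (hA : A.IsHermitian) (r : ℕ) :
    (A * wNewton μ₀ A hA r).trace =
      (r + 1 : ℝ) * wsigma μ₀ hA.eigenvalues (r + 1) - μ₀ * wsigma μ₀ hA.eigenvalues r := by
  have h := congrArg (coeff r) (derivative_wsigmaSeries hA.eigenvalues μ₀)
  rw [coeff_derivative, add_mul, map_add, coeff_C_mul, ← trace_mul_wNewton_eq_coeff,
    coeff_wsigmaSeries, coeff_wsigmaSeries] at h
  linarith
end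

section
/- Let A be a symmetric n×n real matrix and μ₀ ∈ ℝ. Then trace(T_r^∞(μ₀, A)) = (n − r)·σ_r^∞(μ₀, A) + μ₀·σ_{r-1}^∞(μ₀, A) for all r ≥ 1. -/
/-!
Expanding `σ_{r-j}^∞` inside `T_r^∞` and exchanging the two sums gives
`T_r^∞(μ₀, A) = Σ_k (μ₀^k / k!) T_{r-k}(A)`. The classical identity `tr T_m = (n - m) σ_m` is
Newton's identity for the eigenvalues, since `tr A^j` is their `j`-th power sum. Hence
`tr T_r^∞ = Σ_k (μ₀^k / k!) (n - r + k) σ_{r-k}`, and the surplus terms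
`k μ₀^k / k! = μ₀ · μ₀^{k-1} / (k-1)!` add up to `μ₀ σ_{r-1}^∞`.
-/

open Finset

theorem Finset.sum_range_sum_range_sub_comm {M : Type*} [AddCommMonoid M] (r : ℕ)
    (f : ℕ → ℕ → M) :
    ∑ j ∈ range (r + 1), ∑ k ∈ range (r - j + 1), f j k =
      ∑ k ∈ range (r + 1), ∑ j ∈ range (r - k + 1), f j k :=
  sum_comm' fun j k => by simp only [mem_range]; omega

theorem natCast_succ_mul_pow_div_factorial_succ {K : Type*} [Field K] [CharZero K] (x : K)
    (k : ℕ) :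
    ((k + 1 : ℕ) : K) * (x ^ (k + 1) / (k + 1).factorial) = x * (x ^ k / k.factorial) := by
  rw [Nat.factorial_succ, Nat.cast_mul, pow_succ]
  field_simp

namespace MvPolynomial

variable (σ R : Type*) [CommRing R] [Fintype σ]

theorem sum_antidiagonal_neg_one_pow_esymm_mul_psum (k : ℕ) :
    ∑ a ∈ antidiagonal k, (-1) ^ a.2 * esymm σ R a.1 * psum σ R a.2 =
      ((Fintype.card σ : MvPolynomial σ R) - k) * esymm σ R k := by
  have hlast : (antidiagonal k).filter (fun a => ¬ a.1 < k) = {(k, 0)} := by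
    ext a
    simp only [mem_filter, HasAntidiagonal.mem_antidiagonal, mem_singleton, not_lt, Prod.ext_iff]
    omega
  have hsign : ∀ a ∈ (antidiagonal k).filter (fun a => a.1 < k),
      (-1 : MvPolynomial σ R) ^ a.2 * esymm σ R a.1 * psum σ R a.2 =
        (-1) ^ k * ((-1) ^ a.1 * esymm σ R a.1 * psum σ R a.2) := by
    intro a ha
    obtain rfl : k = a.1 + a.2 := (HasAntidiagonal.mem_antidiagonal.mp (mem_filter.mp ha).1).symm
    have hsq : (-1 : MvPolynomial σ R) ^ a.1 * (-1) ^ a.1 = 1 := by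
      rw [← mul_pow, neg_one_mul, neg_neg, one_pow]
    linear_combination (-(-1) ^ a.2 * esymm σ R a.1 * psum σ R a.2) * hsq
  have hnewton := mul_esymm_eq_sum σ R k
  rw [← sum_filter_add_sum_filter_not _ (fun a => a.1 < k), sum_congr rfl hsign, ← mul_sum,
    hlast, sum_singleton, pow_zero, one_mul, psum_zero]
  linear_combination hnewton

end MvPolynomial

theorem aeval_esymm_eq_esymmVec {n : ℕ} (μ : Fin n → ℝ) (k : ℕ) :
    MvPolynomial.aeval μ (MvPolynomial.esymm (Fin n) ℝ k) = esymmVec μ k := by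
  rw [MvPolynomial.aeval_esymm_eq_multiset_esymm, esymm_map_val, esymmVec]

theorem sum_range_neg_one_pow_mul_esymmVec_mul_sum_pow {n : ℕ} (μ : Fin n → ℝ) (m : ℕ) :
    ∑ j ∈ range (m + 1), (-1) ^ j * esymmVec μ (m - j) * ∑ i, μ i ^ j =
      ((n : ℝ) - m) * esymmVec μ m := by
  have h := congrArg (MvPolynomial.aeval μ)
    (MvPolynomial.sum_antidiagonal_neg_one_pow_esymm_mul_psum (Fin n) ℝ m)
  simp only [map_sum, map_mul, map_sub, map_pow, map_neg, map_one, map_natCast,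
    aeval_esymm_eq_esymmVec, MvPolynomial.psum, MvPolynomial.aeval_X, Fintype.card_fin] at h
  rw [← h, ← Nat.sum_antidiagonal_swap]
  exact (Nat.sum_antidiagonal_eq_sum_range_succ
    (fun j i => (-1) ^ j * esymmVec μ i * ∑ x, μ x ^ j) m).symm

namespace Matrix.IsHermitian

theorem trace_pow_s7 {𝕜 ι : Type*} [RCLike 𝕜] [Fintype ι] [DecidableEq ι] {A : Matrix ι ι 𝕜}
    (hA : A.IsHermitian) (j : ℕ) : (A ^ j).trace = ∑ i, (hA.eigenvalues i : 𝕜) ^ j := by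
  conv_lhs => rw [hA.spectral_theorem, ← map_pow, Unitary.conjStarAlgAut_apply, trace_mul_cycle,
    Unitary.coe_star_mul_self, one_mul, diagonal_pow, trace_diagonal]
  rfl

end Matrix.IsHermitian

theorem trace_cNewton {n : ℕ} (A : Matrix (Fin n) (Fin n) ℝ) (hA : A.IsHermitian) (m : ℕ) :
    (cNewton A hA m).trace = ((n : ℝ) - m) * esymmVec hA.eigenvalues m := by
  simp only [cNewton, Matrix.trace_sum, Matrix.trace_smul, hA.trace_pow_s7, smul_eq_mul,
    RCLike.ofReal_real_eq_id, id]
  exact sum_range_neg_one_pow_mul_esymmVec_mul_sum_pow _ m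

theorem wNewton_eq_sum_smul_cNewton {n : ℕ} (μ₀ : ℝ) (A : Matrix (Fin n) (Fin n) ℝ)
    (hA : A.IsHermitian) (r : ℕ) :
    wNewton μ₀ A hA r = ∑ k ∈ range (r + 1), (μ₀ ^ k / k.factorial) • cNewton A hA (r - k) := by
  simp only [wNewton, wsigma, cNewton, mul_sum, sum_smul, smul_sum, smul_smul]
  rw [sum_range_sum_range_sub_comm]
  refine sum_congr rfl fun k _ => sum_congr rfl fun j _ => ?_
  rw [show r - j - k = r - k - j by omega]
  ring_nf

theorem sum_range_mul_pow_div_factorial_mul_esymmVec {n : ℕ} (μ₀ : ℝ) (μ : Fin n → ℝ) {r : ℕ}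
    (hr : 1 ≤ r) :
    ∑ k ∈ range (r + 1), (k : ℝ) * (μ₀ ^ k / k.factorial) * esymmVec μ (r - k) =
      μ₀ * wsigma μ₀ μ (r - 1) := by
  obtain ⟨r, rfl⟩ := Nat.exists_eq_add_of_le' hr
  rw [sum_range_succ', Nat.cast_zero, zero_mul, zero_mul, add_zero, wsigma, mul_sum,
    Nat.add_sub_cancel]
  refine sum_congr rfl fun k _ => ?_
  rw [Nat.add_sub_add_right, natCast_succ_mul_pow_div_factorial_succ, mul_assoc]

/-- `trace(T_r^∞(μ₀, A)) = (n − r)·σ_r^∞(μ₀, A) + μ₀·σ_{r-1}^∞(μ₀, A)` for all `r ≥ 1`. -/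
theorem trace_wNewton {n : ℕ} (μ₀ : ℝ) (A : Matrix (Fin n) (Fin n) ℝ)
    (hA : A.IsHermitian) (r : ℕ) (hr : 1 ≤ r) :
    (wNewton μ₀ A hA r).trace =
      ((n : ℝ) - r) * wsigma μ₀ hA.eigenvalues r + μ₀ * wsigma μ₀ hA.eigenvalues (r - 1) := by
  set μ := hA.eigenvalues
  rw [wNewton_eq_sum_smul_cNewton, Matrix.trace_sum]
  simp only [Matrix.trace_smul, trace_cNewton, smul_eq_mul]
  calc ∑ k ∈ range (r + 1), μ₀ ^ k / k.factorial * (((n : ℝ) - (r - k : ℕ)) * esymmVec μ (r - k))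
      = ∑ k ∈ range (r + 1), (((n : ℝ) - r) * (μ₀ ^ k / k.factorial * esymmVec μ (r - k)) +
          (k : ℝ) * (μ₀ ^ k / k.factorial) * esymmVec μ (r - k)) :=
        sum_congr rfl fun k hk => by rw [Nat.cast_sub (mem_range_succ_iff.mp hk)]; ring
    _ = ((n : ℝ) - r) * wsigma μ₀ μ r + μ₀ * wsigma μ₀ μ (r - 1) := by
        rw [sum_add_distrib, ← mul_sum, sum_range_mul_pow_div_factorial_mul_esymmVec μ₀ μ hr]
        rfl
end

section
/- Let A(t) be a smooth one-parameter family of symmetric n×n real matrices and μ₀(t) a smooth real-valued function. Then d/dt [σ_{r+1}^∞(μ₀(t), A(t))] = trace(A'(t)·T_r^∞(μ₀(t), A(t))) + σ_r^∞(μ₀(t), A(t))·μ₀'(t). -/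
open Matrix Finset

lemma vieta {n : ℕ} (μ : Fin n → ℝ) (x : ℝ) :
    ∏ i, (x - μ i) = ∑ k ∈ range (n + 1), (-1 : ℝ) ^ k * esymmVec μ k * x ^ (n - k) := by
  have h : ∀ i : Fin n, x - μ i = (-μ i) + x := fun i => by ring
  simp only [h]
  rw [Finset.prod_add, Finset.sum_powerset]
  simp only [Fintype.card_fin, card_univ]
  refine Finset.sum_congr rfl fun k hk => ?_
  rw [esymmVec, Finset.mul_sum, Finset.sum_mul]
  refine Finset.sum_congr rfl fun s hs => ?_
  rw [Finset.mem_powersetCard] at hs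
  have : ∏ i ∈ s, -μ i = (-1 : ℝ) ^ s.card * ∏ i ∈ s, μ i := by
    rw [show (fun i => -μ i) = fun i => (-1 : ℝ) * μ i from funext fun i => by ring,
      Finset.prod_mul_distrib, Finset.prod_const]
  rw [Finset.prod_const, Finset.card_sdiff_of_subset hs.1, card_univ, Fintype.card_fin, this, hs.2]

lemma esymmVec_eq_zero {n : ℕ} (μ : Fin n → ℝ) {k : ℕ} (hk : n < k) : esymmVec μ k = 0 := by
  rw [esymmVec, Finset.powersetCard_eq_empty.2 (by simpa using hk), Finset.sum_empty]

lemma esymmVec_zero {n : ℕ} (μ : Fin n → ℝ) : esymmVec μ 0 = 1 := by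
  simp [esymmVec]

lemma spectral_real {n : ℕ} (A : Matrix (Fin n) (Fin n) ℝ) (hA : A.IsHermitian) :
    A = (hA.eigenvectorUnitary : Matrix (Fin n) (Fin n) ℝ) * diagonal hA.eigenvalues *
      star (hA.eigenvectorUnitary : Matrix (Fin n) (Fin n) ℝ) := by
  have := hA.spectral_theorem
  simpa [RCLike.ofReal_real_eq_id] using this

lemma det_smul_one_sub {n : ℕ} (A : Matrix (Fin n) (Fin n) ℝ) (hA : A.IsHermitian) (x : ℝ) :
    (x • (1 : Matrix (Fin n) (Fin n) ℝ) - A).det = ∏ i, (x - hA.eigenvalues i) := by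
  set U : Matrix (Fin n) (Fin n) ℝ := (hA.eigenvectorUnitary : Matrix (Fin n) (Fin n) ℝ) with hUdef
  have hU : U * star U = 1 := (Matrix.mem_unitaryGroup_iff).mp hA.eigenvectorUnitary.2
  have key : x • (1 : Matrix (Fin n) (Fin n) ℝ) - A
      = U * (x • (1 : Matrix (Fin n) (Fin n) ℝ) - diagonal hA.eigenvalues) * star U := by
    rw [Matrix.mul_sub, Matrix.sub_mul]
    have h1 : U * (x • (1 : Matrix (Fin n) (Fin n) ℝ)) * star U = x • (1 : Matrix (Fin n) (Fin n) ℝ) := by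
      rw [Matrix.mul_smul, Matrix.smul_mul, Matrix.mul_one, hU]
    rw [h1, ← spectral_real A hA]
  rw [key, det_mul_right_comm, hU, one_mul, smul_one_eq_diagonal, diagonal_sub, det_diagonal]

lemma uconj_pow {n : ℕ} (U B : Matrix (Fin n) (Fin n) ℝ) (hU : U * star U = 1) (j : ℕ) :
    (U * B * star U) ^ j = U * B ^ j * star U := by
  induction j with
  | zero => simp [hU]
  | succ k ih =>
      rw [pow_succ, pow_succ, ih, Matrix.mul_assoc, Matrix.mul_assoc]
      have hU' : star U * U = 1 := mul_eq_one_comm.mp hU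
      rw [show star U * (U * B * star U) = B * star U by
        rw [← Matrix.mul_assoc, ← Matrix.mul_assoc, hU', one_mul]]
      noncomm_ring

lemma cNewton_card {n : ℕ} (A : Matrix (Fin n) (Fin n) ℝ) (hA : A.IsHermitian) :
    cNewton A hA n = 0 := by
  set μ := hA.eigenvalues with hμ
  set U : Matrix (Fin n) (Fin n) ℝ := (hA.eigenvectorUnitary : Matrix (Fin n) (Fin n) ℝ) with hUdef
  have hU : U * star U = 1 := (Matrix.mem_unitaryGroup_iff).mp hA.eigenvectorUnitary.2
  have hpow : ∀ j : ℕ, A ^ j = U * (diagonal μ) ^ j * star U := by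
    intro j
    conv_lhs => rw [spectral_real A hA]
    exact uconj_pow U (diagonal μ) hU j
  have hdiagsum : ∀ i : Fin n,
      ∑ j ∈ range (n + 1), ((-1 : ℝ) ^ j * esymmVec μ (n - j)) * μ i ^ j = 0 := by
    intro i
    have h0 : ∏ l, (μ i - μ l) = 0 :=
      Finset.prod_eq_zero (Finset.mem_univ i) (by simp)
    have hrefl := Finset.sum_range_reflect
      (fun j => ((-1 : ℝ) ^ j * esymmVec μ (n - j)) * μ i ^ j) (n + 1)
    have hstep : ∀ j ∈ range (n + 1),
        ((-1 : ℝ) ^ (n + 1 - 1 - j) * esymmVec μ (n - (n + 1 - 1 - j))) * μ i ^ (n + 1 - 1 - j)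
          = (-1 : ℝ) ^ n * ((-1 : ℝ) ^ j * esymmVec μ j * μ i ^ (n - j)) := by
      intro j hj
      rw [Finset.mem_range] at hj
      have hjn : j ≤ n := Nat.lt_succ_iff.mp hj
      have h1 : n + 1 - 1 - j = n - j := by omega
      have h2 : n - (n - j) = j := Nat.sub_sub_self hjn
      have h3 : (-1 : ℝ) ^ (n - j) = (-1 : ℝ) ^ n * (-1 : ℝ) ^ j := by
        have : n + j = (n - j) + 2 * j := by omega
        have := pow_add (-1 : ℝ) n j
        rw [show n + j = (n - j) + 2 * j from by omega, pow_add, pow_mul] at this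
        simp at this
        rw [← this]
      rw [h1, h2, h3]; ring
    rw [← hrefl, Finset.sum_congr rfl hstep, ← Finset.mul_sum, ← vieta μ (μ i), h0, mul_zero]
  have hdZero : ∑ j ∈ range (n + 1), ((-1 : ℝ) ^ j * esymmVec μ (n - j)) • (diagonal μ) ^ j
      = (0 : Matrix (Fin n) (Fin n) ℝ) := by
    ext i k
    rw [Matrix.sum_apply]
    simp only [diagonal_pow, Matrix.smul_apply, diagonal_apply, smul_eq_mul, Pi.pow_apply]
    by_cases h : i = k
    · subst h
      simp only [if_pos rfl]
      simpa using hdiagsum i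
    · simp [h]
  have : cNewton A hA n = U * (∑ j ∈ range (n + 1),
      ((-1 : ℝ) ^ j * esymmVec μ (n - j)) • (diagonal μ) ^ j) * star U := by
    rw [cNewton, Finset.mul_sum, Finset.sum_mul]
    refine Finset.sum_congr rfl fun j _ => ?_
    rw [hpow j, Matrix.mul_smul, Matrix.smul_mul]
  rw [this, hdZero, Matrix.mul_zero, Matrix.zero_mul]

lemma cNewton_zero {n : ℕ} (A : Matrix (Fin n) (Fin n) ℝ) (hA : A.IsHermitian) :
    cNewton A hA 0 = 1 := by
  simp [cNewton, esymmVec_zero]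

lemma mul_cNewton {n : ℕ} (A : Matrix (Fin n) (Fin n) ℝ) (hA : A.IsHermitian) (j : ℕ) :
    A * cNewton A hA j = esymmVec hA.eigenvalues (j + 1) • 1 - cNewton A hA (j + 1) := by
  have h1 : A * cNewton A hA j = ∑ i ∈ range (j + 1),
      ((-1 : ℝ) ^ i * esymmVec hA.eigenvalues (j - i)) • A ^ (i + 1) := by
    rw [cNewton, Finset.mul_sum]
    refine Finset.sum_congr rfl fun i _ => ?_
    rw [Matrix.mul_smul, ← pow_succ']
  have h3 : cNewton A hA (j + 1) = (∑ i ∈ range (j + 1),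
      ((-1 : ℝ) ^ (i + 1) * esymmVec hA.eigenvalues (j + 1 - (i + 1))) • A ^ (i + 1))
      + esymmVec hA.eigenvalues (j + 1) • (1 : Matrix (Fin n) (Fin n) ℝ) := by
    rw [cNewton, Finset.sum_range_succ']
    simp
  have h2 : ∀ i ∈ range (j + 1),
      ((-1 : ℝ) ^ (i + 1) * esymmVec hA.eigenvalues (j + 1 - (i + 1))) • A ^ (i + 1)
        = -(((-1 : ℝ) ^ i * esymmVec hA.eigenvalues (j - i)) • A ^ (i + 1)) := by
    intro i _
    rw [Nat.succ_sub_succ_eq_sub, pow_succ]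
    rw [← neg_smul]; ring_nf
  rw [h1, h3, Finset.sum_congr rfl h2, Finset.sum_neg_distrib]
  abel

lemma cNewton_eq_zero {n : ℕ} (A : Matrix (Fin n) (Fin n) ℝ) (hA : A.IsHermitian)
    {m : ℕ} (hm : n ≤ m) : cNewton A hA m = 0 := by
  induction m with
  | zero =>
      have h0 : n = 0 := Nat.le_zero.mp hm
      subst h0; exact cNewton_card A hA
  | succ k ih =>
      rcases Nat.lt_or_ge n (k + 1) with h | h
      · have hk : n ≤ k := Nat.lt_succ_iff.mp h
        have := mul_cNewton A hA k
        rw [ih hk, Matrix.mul_zero, esymmVec_eq_zero _ (by omega)] at this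
        simpa using this.symm
      · have : n = k + 1 := le_antisymm hm h
        exact this ▸ cNewton_card A hA

lemma smul_one_sub_mul_newton {n : ℕ} (A : Matrix (Fin n) (Fin n) ℝ) (hA : A.IsHermitian)
    (x : ℝ) :
    (x • (1 : Matrix (Fin n) (Fin n) ℝ) - A) *
      (∑ j ∈ range n, ((-1 : ℝ) ^ j * x ^ (n - 1 - j)) • cNewton A hA j) =
      (x • (1 : Matrix (Fin n) (Fin n) ℝ) - A).det • 1 := by
  set g : ℕ → Matrix (Fin n) (Fin n) ℝ :=
    fun j => ((-1 : ℝ) ^ j * x ^ (n - j)) • cNewton A hA j with hg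
  have hmain : (x • (1 : Matrix (Fin n) (Fin n) ℝ) - A) *
      (∑ j ∈ range n, ((-1 : ℝ) ^ j * x ^ (n - 1 - j)) • cNewton A hA j) =
      ∑ j ∈ range n, ((g j - g (j + 1)) -
        ((-1 : ℝ) ^ j * x ^ (n - 1 - j) * esymmVec hA.eigenvalues (j + 1)) • 1) := by
    rw [Finset.mul_sum]
    refine Finset.sum_congr rfl fun j hj => ?_
    rw [Finset.mem_range] at hj
    rw [Matrix.mul_smul, Matrix.sub_mul, Matrix.smul_mul, mul_cNewton A hA j, hg]
    simp only []
    have hx2 : (-1 : ℝ) ^ j * x ^ (n - 1 - j) * x = (-1 : ℝ) ^ j * x ^ (n - j) := by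
      rw [mul_assoc, ← pow_succ]
      congr 2
      omega
    have hx3 : n - (j + 1) = n - 1 - j := by omega
    rw [one_mul, smul_sub, smul_smul, hx2, smul_sub, pow_succ, hx3, smul_smul]
    module
  rw [hmain, Finset.sum_sub_distrib, Finset.sum_range_sub' g n, hg]
  simp only [pow_zero, one_mul, Nat.sub_zero]
  rw [cNewton_zero, cNewton_card, smul_zero, sub_zero, ← Finset.sum_smul, ← sub_smul]
  congr 1
  rw [det_smul_one_sub A hA x, vieta,
    Finset.sum_range_succ' (fun k => (-1 : ℝ) ^ k * esymmVec hA.eigenvalues k * x ^ (n - k)) n]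
  have h4 : ∀ j ∈ range n, (-1 : ℝ) ^ (j + 1) * esymmVec hA.eigenvalues (j + 1) * x ^ (n - (j + 1))
      = -((-1 : ℝ) ^ j * x ^ (n - 1 - j) * esymmVec hA.eigenvalues (j + 1)) := by
    intro j hj
    rw [pow_succ, show n - (j + 1) = n - 1 - j from by omega]
    ring
  rw [Finset.sum_congr rfl h4, Finset.sum_neg_distrib, esymmVec_zero]
  simp only [Nat.sub_zero]
  ring

lemma adjugate_eq_newton {n : ℕ} (A : Matrix (Fin n) (Fin n) ℝ) (hA : A.IsHermitian)
    (x : ℝ) (hx : (x • (1 : Matrix (Fin n) (Fin n) ℝ) - A).det ≠ 0) :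
    (x • (1 : Matrix (Fin n) (Fin n) ℝ) - A).adjugate =
      ∑ j ∈ range n, ((-1 : ℝ) ^ j * x ^ (n - 1 - j)) • cNewton A hA j := by
  set B := x • (1 : Matrix (Fin n) (Fin n) ℝ) - A with hB
  have h1 : B * B.adjugate = B * (∑ j ∈ range n, ((-1 : ℝ) ^ j * x ^ (n - 1 - j)) • cNewton A hA j) := by
    rw [Matrix.mul_adjugate, smul_one_sub_mul_newton A hA x]
  have hu : IsUnit B.det := isUnit_iff_ne_zero.mpr hx
  have := congrArg (fun M => B⁻¹ * M) h1
  simpa [← Matrix.mul_assoc, Matrix.nonsing_inv_mul B hu] using this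

lemma hasDerivAt_det {n : ℕ} (B : ℝ → Matrix (Fin n) (Fin n) ℝ)
    (B' : Matrix (Fin n) (Fin n) ℝ) (t : ℝ)
    (hB : ∀ i j, HasDerivAt (fun s => B s i j) (B' i j) t) :
    HasDerivAt (fun s => (B s).det) (((B t).adjugate * B').trace) t := by
  have h1 : HasDerivAt (fun s => (B s).det)
      (∑ σ : Equiv.Perm (Fin n), ((Equiv.Perm.sign σ : ℤ) : ℝ) *
        (∑ i, (∏ j ∈ Finset.univ.erase i, B t (σ j) j) * B' (σ i) i)) t := by
    have hfun : (fun s => (B s).det) = fun s =>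
        ∑ σ : Equiv.Perm (Fin n), ((Equiv.Perm.sign σ : ℤ) : ℝ) * ∏ i, B s (σ i) i := by
      funext s; exact Matrix.det_apply' _
    rw [hfun]
    apply HasDerivAt.fun_sum
    intro σ _
    have hp := HasDerivAt.finset_prod (u := Finset.univ)
      (f := fun (i : Fin n) (s : ℝ) => B s (σ i) i) (f' := fun i => B' (σ i) i)
      (x := t) (fun i _ => hB (σ i) i)
    have := hp.const_mul (((Equiv.Perm.sign σ : ℤ) : ℝ))
    convert this using 1
    · rfl
    · funext y; rw [Finset.prod_apply]
    · simp only [smul_eq_mul]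
  have h2 : ∀ i : Fin n, ((B t).updateCol i (fun k => B' k i)).det
      = ∑ σ : Equiv.Perm (Fin n), ((Equiv.Perm.sign σ : ℤ) : ℝ) *
          ((∏ j ∈ Finset.univ.erase i, B t (σ j) j) * B' (σ i) i) := by
    intro i
    rw [Matrix.det_apply']
    refine Finset.sum_congr rfl fun σ _ => ?_
    congr 1
    have hstep : ∀ j : Fin n, ((B t).updateCol i fun k => B' k i) (σ j) j
        = if j = i then B' (σ j) j else B t (σ j) j := fun j => by
      rw [Matrix.updateCol_apply]
      by_cases h : j = i
      · subst h; rfl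
      · simp [h]
    calc ∏ j, ((B t).updateCol i fun k => B' k i) (σ j) j
        = ∏ j, if j = i then B' (σ j) j else B t (σ j) j :=
          Finset.prod_congr rfl fun j _ => hstep j
      _ = (if i = i then B' (σ i) i else B t (σ i) i) *
            ∏ j ∈ Finset.univ.erase i, if j = i then B' (σ j) j else B t (σ j) j :=
          (Finset.mul_prod_erase Finset.univ _ (Finset.mem_univ i)).symm
      _ = (∏ j ∈ Finset.univ.erase i, B t (σ j) j) * B' (σ i) i := by
          rw [if_pos rfl, mul_comm]
          congr 1
          exact Finset.prod_congr rfl fun j hj => if_neg (Finset.ne_of_mem_erase hj)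
  have h3 : ((B t).adjugate * B').trace = ∑ i, ((B t).updateCol i (fun k => B' k i)).det := by
    rw [Matrix.trace]
    refine Finset.sum_congr rfl fun i _ => ?_
    have h := congrFun (Matrix.cramer_eq_adjugate_mulVec (B t) (fun k => B' k i)) i
    rw [Matrix.cramer_apply] at h
    rw [h]
    simp [Matrix.mul_apply, Matrix.mulVec, dotProduct]
  have h4 : ((B t).adjugate * B').trace = ∑ σ : Equiv.Perm (Fin n),
      ((Equiv.Perm.sign σ : ℤ) : ℝ) *
        (∑ i, (∏ j ∈ Finset.univ.erase i, B t (σ j) j) * B' (σ i) i) := by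
    rw [h3, Finset.sum_congr rfl fun i _ => h2 i, Finset.sum_comm]
    exact Finset.sum_congr rfl fun σ _ => (Finset.mul_sum _ _ _).symm
  rw [h4]
  exact h1

lemma key {n : ℕ} (A : ℝ → Matrix (Fin n) (Fin n) ℝ)
    (hA : ∀ t, (A t).IsHermitian)
    (hAsmooth : ∀ i j, ContDiff ℝ (⊤ : ℕ∞) fun t => A t i j) (r : ℕ) (t : ℝ) :
    HasDerivAt (fun s => esymmVec (hA s).eigenvalues (r + 1))
      ((Matrix.of (fun i j => deriv (fun s => A s i j) t) * cNewton (A t) (hA t) r).trace) t := by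
  set A' : Matrix (Fin n) (Fin n) ℝ := Matrix.of (fun i j => deriv (fun s => A s i j) t) with hA'def
  have hder : ∀ i j, HasDerivAt (fun s => A s i j) (A' i j) t := by
    intro i j
    have hd : DifferentiableAt ℝ (fun s => A s i j) t :=
      ((hAsmooth i j).differentiable (by simp)).differentiableAt
    simpa [hA'def] using hd.hasDerivAt
  rcases Nat.lt_or_ge r n with hrn | hrn
  swap
  · -- degenerate case r ≥ n
    have hz : (fun s => esymmVec (hA s).eigenvalues (r + 1)) = fun _ => (0 : ℝ) := by
      funext s; exact esymmVec_eq_zero _ (by omega)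
    rw [hz, cNewton_eq_zero _ _ hrn, Matrix.mul_zero, Matrix.trace_zero]
    exact hasDerivAt_const t 0
  -- main case r < n
  have hn1 : 1 ≤ n := by omega
  set μ := (hA t).eigenvalues with hμ
  set Bnd : ℝ := ∑ j, |μ j| with hBnd
  set xs : Fin (n + 1) → ℝ := fun i => Bnd + 1 + (i : ℕ) with hxs
  have hμle : ∀ j, μ j ≤ Bnd := fun j =>
    (le_abs_self _).trans (Finset.single_le_sum (f := fun j => |μ j|)
      (fun _ _ => abs_nonneg _) (Finset.mem_univ j))
  have hxpos : ∀ i j, 0 < xs i - μ j := by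
    intro i j
    have h0 : (0 : ℝ) ≤ ((i : ℕ) : ℝ) := Nat.cast_nonneg _
    have := hμle j
    simp only [hxs]
    nlinarith
  have hdet : ∀ i, (xs i • (1 : Matrix (Fin n) (Fin n) ℝ) - A t).det ≠ 0 := by
    intro i
    rw [det_smul_one_sub (A t) (hA t) (xs i)]
    exact ne_of_gt (Finset.prod_pos fun j _ => hxpos i j)
  have hxs_inj : Function.Injective xs := by
    intro a b hab
    simp only [hxs, add_right_inj] at hab
    exact Fin.ext (Nat.cast_inj.mp hab)
  set V := Matrix.vandermonde xs with hV
  have hVdet : IsUnit V.det :=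
    isUnit_iff_ne_zero.2 (Matrix.det_vandermonde_ne_zero_iff.2 hxs_inj)
  set b : ℝ → Fin (n + 1) → ℝ :=
    fun s k => (-1 : ℝ) ^ (n - (k : ℕ)) * esymmVec (hA s).eigenvalues (n - (k : ℕ)) with hb
  set F : ℝ → Fin (n + 1) → ℝ :=
    fun s i => (xs i • (1 : Matrix (Fin n) (Fin n) ℝ) - A s).det with hF
  have hVb : ∀ s, V.mulVec (b s) = F s := by
    intro s
    funext i
    have h1 : F s i = ∑ m ∈ range (n + 1),
        (-1 : ℝ) ^ m * esymmVec (hA s).eigenvalues m * xs i ^ (n - m) := by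
      rw [hF]
      simp only []
      rw [det_smul_one_sub (A s) (hA s) (xs i), vieta]
    have h2 : (V.mulVec (b s)) i = ∑ k ∈ range (n + 1),
        xs i ^ k * ((-1 : ℝ) ^ (n - k) * esymmVec (hA s).eigenvalues (n - k)) := by
      rw [Matrix.mulVec, dotProduct]
      rw [← Fin.sum_univ_eq_sum_range
        (fun k => xs i ^ k * ((-1 : ℝ) ^ (n - k) * esymmVec (hA s).eigenvalues (n - k))) (n + 1)]
      exact Finset.sum_congr rfl fun k _ => by rw [hV, Matrix.vandermonde_apply, hb]
    rw [h1, h2]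
    conv_rhs => rw [← Finset.sum_range_reflect]
    refine Finset.sum_congr rfl fun k hk => ?_
    rw [Finset.mem_range] at hk
    have hkn : k ≤ n := by omega
    rw [show n + 1 - 1 - k = n - k from by omega, Nat.sub_sub_self hkn]
    ring
  have hdF : ∀ i, HasDerivAt (fun s => F s i)
      (((xs i • (1 : Matrix (Fin n) (Fin n) ℝ) - A t).adjugate * (-A')).trace) t := by
    intro i
    apply hasDerivAt_det (fun s => xs i • (1 : Matrix (Fin n) (Fin n) ℝ) - A s)
    intro p q
    have h1 : (fun s => (xs i • (1 : Matrix (Fin n) (Fin n) ℝ) - A s) p q)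
        = fun s => (xs i • (1 : Matrix (Fin n) (Fin n) ℝ)) p q - A s p q := rfl
    rw [h1]
    have := (hasDerivAt_const t ((xs i • (1 : Matrix (Fin n) (Fin n) ℝ)) p q)).sub (hder p q)
    simpa [Pi.sub_def] using this
  set d : Fin (n + 1) → ℝ :=
    fun i => ((xs i • (1 : Matrix (Fin n) (Fin n) ℝ) - A t).adjugate * (-A')).trace with hd
  set cN : ℕ → ℝ := fun k => if k < n then
      (-1 : ℝ) ^ (n - k) * (A' * cNewton (A t) (hA t) (n - 1 - k)).trace
    else 0 with hcN
  set c : Fin (n + 1) → ℝ := fun k => cN (k : ℕ) with hc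
  have hVc : V.mulVec c = d := by
    funext i
    have hdi : d i = ∑ j ∈ range n,
        ((-1 : ℝ) ^ (j + 1) * xs i ^ (n - 1 - j)) * (A' * cNewton (A t) (hA t) j).trace := by
      rw [hd]
      simp only []
      rw [adjugate_eq_newton (A t) (hA t) (xs i) (hdet i), Finset.sum_mul, trace_sum]
      refine Finset.sum_congr rfl fun j hj => ?_
      rw [Matrix.smul_mul, trace_smul, smul_eq_mul, Matrix.mul_neg, trace_neg,
        Matrix.trace_mul_comm, pow_succ]
      ring
    have hci : (V.mulVec c) i = ∑ k ∈ range n,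
        xs i ^ k * ((-1 : ℝ) ^ (n - k) * (A' * cNewton (A t) (hA t) (n - 1 - k)).trace) := by
      rw [Matrix.mulVec, dotProduct]
      rw [Finset.sum_congr rfl (fun (k : Fin (n + 1)) _ =>
          show V i k * c k = xs i ^ (k : ℕ) * cN (k : ℕ) from by
            rw [hV, Matrix.vandermonde_apply, hc]),
        Fin.sum_univ_eq_sum_range (fun k => xs i ^ k * cN k) (n + 1),
        Finset.sum_range_succ, hcN]
      simp only [lt_irrefl, if_false, mul_zero, add_zero]
      refine Finset.sum_congr rfl fun k hk => ?_
      rw [Finset.mem_range] at hk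
      rw [if_pos hk]
    rw [hci, hdi]
    conv_rhs => rw [← Finset.sum_range_reflect]
    refine Finset.sum_congr rfl fun k hk => ?_
    rw [Finset.mem_range] at hk
    rw [show n - 1 - k + 1 = n - k from by omega, show n - 1 - (n - 1 - k) = k from by omega]
    ring
  have hbV : ∀ s, b s = V⁻¹.mulVec (F s) := by
    intro s
    rw [← hVb s, Matrix.mulVec_mulVec, Matrix.nonsing_inv_mul V hVdet, Matrix.one_mulVec]
  have hVinvd : V⁻¹.mulVec d = c := by
    rw [← hVc, Matrix.mulVec_mulVec, Matrix.nonsing_inv_mul V hVdet, Matrix.one_mulVec]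
  have hbc : ∀ kk : Fin (n + 1), HasDerivAt (fun s => b s kk) (c kk) t := by
    intro kk
    have hfun : (fun s => b s kk) = fun s => ∑ i, V⁻¹ kk i * F s i := by
      funext s
      rw [hbV s]
      simp [Matrix.mulVec, dotProduct]
    have hder2 : HasDerivAt (fun s => ∑ i, V⁻¹ kk i * F s i) (∑ i, V⁻¹ kk i * d i) t := by
      apply HasDerivAt.fun_sum
      intro i _
      exact (hdF i).const_mul (V⁻¹ kk i)
    have hsum_eq : (∑ i, V⁻¹ kk i * d i) = c kk := by
      rw [← congrFun hVinvd kk]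
      simp [Matrix.mulVec, dotProduct]
    rw [hfun]
    exact hsum_eq ▸ hder2
  set k0 : Fin (n + 1) := ⟨n - (r + 1), by omega⟩ with hk0
  have hk0v : (k0 : ℕ) = n - (r + 1) := rfl
  have e1 : n - (k0 : ℕ) = r + 1 := by rw [hk0v]; omega
  have e2 : n - 1 - (k0 : ℕ) = r := by rw [hk0v]; omega
  have e3 : (k0 : ℕ) < n := by rw [hk0v]; omega
  have hfun2 : (fun s => esymmVec (hA s).eigenvalues (r + 1))
      = fun s => (-1 : ℝ) ^ (r + 1) * b s k0 := by
    funext s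
    rw [hb]
    simp only []
    rw [e1, ← mul_assoc, ← pow_add, Even.neg_one_pow ⟨r + 1, by ring⟩, one_mul]
  have hck0 : (-1 : ℝ) ^ (r + 1) * c k0 = (A' * cNewton (A t) (hA t) r).trace := by
    rw [hc]
    simp only []
    rw [hcN]
    simp only []
    rw [if_pos e3, e1, e2, ← mul_assoc, ← pow_add, Even.neg_one_pow ⟨r + 1, by ring⟩, one_mul]
  rw [hfun2, ← hck0]
  exact (hbc k0).const_mul ((-1 : ℝ) ^ (r + 1))

lemma wNewton_eq_sum {n : ℕ} (μ₀ : ℝ) (A : Matrix (Fin n) (Fin n) ℝ) (hA : A.IsHermitian)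
    (r : ℕ) :
    wNewton μ₀ A hA r =
      ∑ l ∈ range (r + 1), (μ₀ ^ l / (Nat.factorial l : ℝ)) • cNewton A hA (r - l) := by
  rw [wNewton]
  have h1 : ∀ j ∈ range (r + 1), ((-1 : ℝ) ^ j * wsigma μ₀ hA.eigenvalues (r - j)) • A ^ j
      = ∑ l ∈ range (r - j + 1),
          ((-1 : ℝ) ^ j * (μ₀ ^ l / (Nat.factorial l : ℝ) * esymmVec hA.eigenvalues (r - j - l))) • A ^ j := by
    intro j _
    rw [wsigma, Finset.mul_sum, Finset.sum_smul]
  have h2 : ∀ l ∈ range (r + 1), (μ₀ ^ l / (Nat.factorial l : ℝ)) • cNewton A hA (r - l)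
      = ∑ j ∈ range (r - l + 1),
          ((-1 : ℝ) ^ j * (μ₀ ^ l / (Nat.factorial l : ℝ) * esymmVec hA.eigenvalues (r - l - j))) • A ^ j := by
    intro l _
    rw [cNewton, Finset.smul_sum]
    refine Finset.sum_congr rfl fun j _ => ?_
    rw [smul_smul]
    congr 1
    ring
  rw [Finset.sum_congr rfl h1, Finset.sum_congr rfl h2]
  rw [Finset.sum_comm' (t' := range (r + 1)) (s' := fun l => range (r - l + 1))
    (fun j l => by
      simp only [Finset.mem_range]
      omega)]
  refine Finset.sum_congr rfl fun l _ => Finset.sum_congr rfl fun j _ => ?_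
  rw [show r - j - l = r - l - j from by omega]


/-- For a smooth one-parameter family `A(t)` of symmetric matrices and a smooth weight
`μ₀(t)`:
`d/dt σ_{r+1}^∞(μ₀(t), A(t)) = trace(A'(t)·T_r^∞(μ₀(t), A(t))) + σ_r^∞(μ₀(t), A(t))·μ₀'(t)`. -/
theorem deriv_wsigma {n : ℕ} (A : ℝ → Matrix (Fin n) (Fin n) ℝ)
    (hA : ∀ t, (A t).IsHermitian)
    (hAsmooth : ∀ i j, ContDiff ℝ (⊤ : ℕ∞) fun t => A t i j)
    (μ₀ : ℝ → ℝ) (hμ₀ : ContDiff ℝ (⊤ : ℕ∞) μ₀) (r : ℕ) (t : ℝ) :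
    HasDerivAt (fun s => wsigma (μ₀ s) (hA s).eigenvalues (r + 1))
      ((Matrix.of (fun i j => deriv (fun s => A s i j) t) *
          wNewton (μ₀ t) (A t) (hA t) r).trace +
        wsigma (μ₀ t) (hA t).eigenvalues r * deriv μ₀ t) t := by
  set A' : Matrix (Fin n) (Fin n) ℝ := Matrix.of (fun i j => deriv (fun s => A s i j) t) with hA'def
  have hμd : HasDerivAt μ₀ (deriv μ₀ t) t := ((hμ₀.differentiable (by simp)) t).hasDerivAt
  set P : ℕ → ℝ := fun j => ((j : ℝ) * μ₀ t ^ (j - 1) * deriv μ₀ t) / (Nat.factorial j : ℝ)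
      * esymmVec (hA t).eigenvalues (r + 1 - j) with hP
  set Q : ℕ → ℝ := fun j => if j ≤ r then
      μ₀ t ^ j / (Nat.factorial j : ℝ) * (A' * cNewton (A t) (hA t) (r - j)).trace else 0 with hQ
  have hfun : (fun s => wsigma (μ₀ s) (hA s).eigenvalues (r + 1)) =
      fun s => ∑ j ∈ range (r + 2), μ₀ s ^ j / (Nat.factorial j : ℝ)
        * esymmVec (hA s).eigenvalues (r + 1 - j) := rfl
  have hterm : ∀ j ∈ range (r + 2), HasDerivAt
      (fun s => μ₀ s ^ j / (Nat.factorial j : ℝ) * esymmVec (hA s).eigenvalues (r + 1 - j))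
      (P j + Q j) t := by
    intro j hj
    rw [Finset.mem_range] at hj
    have hpow : HasDerivAt (fun s => μ₀ s ^ j / (Nat.factorial j : ℝ))
        (((j : ℝ) * μ₀ t ^ (j - 1) * deriv μ₀ t) / (Nat.factorial j : ℝ)) t :=
      (hμd.pow j).div_const _
    rcases Nat.lt_or_ge j (r + 1) with h | h
    · have hjr : j ≤ r := by omega
      have hrw : r + 1 - j = (r - j) + 1 := by omega
      rw [hrw]
      have hsig := key A hA hAsmooth (r - j) t
      have := hpow.mul hsig
      simp only [Pi.mul_def] at this
      convert this using 1
      · rfl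
      · rfl
      rw [hP, hQ]
      simp only []
      rw [if_pos hjr, hrw]
    · have hj1 : j = r + 1 := by omega
      subst hj1
      have hconst : (fun s => μ₀ s ^ (r + 1) / (Nat.factorial (r + 1) : ℝ)
            * esymmVec (hA s).eigenvalues (r + 1 - (r + 1)))
          = fun s => μ₀ s ^ (r + 1) / (Nat.factorial (r + 1) : ℝ) := by
        funext s
        rw [Nat.sub_self, esymmVec_zero, mul_one]
      rw [hconst]
      convert hpow using 1
      rw [hP, hQ]
      simp only []
      rw [if_neg (by omega), Nat.sub_self, esymmVec_zero, mul_one, add_zero]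
  have hsum := HasDerivAt.fun_sum hterm
  rw [hfun]
  convert hsum using 1
  · rfl
  · rfl
  rw [Finset.sum_add_distrib]
  have hPsum : ∑ j ∈ range (r + 2), P j = wsigma (μ₀ t) (hA t).eigenvalues r * deriv μ₀ t := by
    rw [Finset.sum_range_succ' P (r + 1)]
    have hP0 : P 0 = 0 := by rw [hP]; simp
    rw [hP0, add_zero]
    rw [wsigma, Finset.sum_mul]
    refine Finset.sum_congr rfl fun i hi => ?_
    rw [hP]
    simp only []
    rw [show r + 1 - (i + 1) = r - i from by omega, Nat.factorial_succ, Nat.succ_sub_one]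
    push_cast
    have hfac : (Nat.factorial i : ℝ) ≠ 0 := Nat.cast_ne_zero.2 (Nat.factorial_ne_zero i)
    field_simp
  have hQsum : ∑ j ∈ range (r + 2), Q j
      = (A' * wNewton (μ₀ t) (A t) (hA t) r).trace := by
    rw [Finset.sum_range_succ, hQ]
    simp only []
    rw [if_neg (by omega), add_zero]
    rw [wNewton_eq_sum, Matrix.mul_sum, trace_sum]
    refine Finset.sum_congr rfl fun j hj => ?_
    rw [Finset.mem_range] at hj
    rw [if_pos (by omega), Matrix.mul_smul, trace_smul, smul_eq_mul]
  rw [hPsum, hQsum]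
  ring
end
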